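/- Let A be a finite-dimensional lozenge algebra with Laplacian Δ = dd* + d*d (adjoints taken with respect to the inner products). Then harmonicity is characterized in each degree as follows: for a ∈ A⁰, Δa = 0 ⇔ ∂a = 0 ⇔ ∂̄a = 0; for a ∈ A^{1,0}, Δa = 0 ⇔ ∂*a = 0 ⇔ ∂̄a = 0; for a ∈ A^{0,1}, Δa = 0 ⇔ ∂a = 0 ⇔ ∂̄*a = 0; for a ∈ A², Δa = 0 ⇔ ∂*a = 0 ⇔ ∂̄*a = 0. -/

import Mathlib

/-- A lozenge algebra: a ℤ-graded unital associative ℂ-algebra `A = A⁰ ⊕ A¹ ⊕ A²`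
concentrated in degrees 0,1,2 (with `A¹ = A^{1,0} ⊕ A^{0,1}`), equipped with a degree 1
derivation `d` with `d² = 0`, a central curvature `θ ∈ A²`, a ℂ-antilinear involution
`*`, a trace `τ : A² → ℂ` (extended by `0` to all of `A`), a Kähler element `ω ∈ A²`
with inverse Lefschetz operator `Λ` (extended by `0` on `A⁰ ⊕ A¹`), positive definite
Hermitian forms on each graded piece, and the Yang–Mills condition `d(Λθ) = 0`. -/
structure LozengeAlgebra (A : Type*) [Ring A] [Algebra ℂ A] where
  A0 : Submodule ℂ A
  A10 : Submodule ℂ A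
  A01 : Submodule ℂ A
  A2 : Submodule ℂ A
  p0 : A →ₗ[ℂ] A
  p10 : A →ₗ[ℂ] A
  p01 : A →ₗ[ℂ] A
  p2 : A →ₗ[ℂ] A
  d : A →ₗ[ℂ] A
  Lam : A →ₗ[ℂ] A
  st : A → A
  tau : A →ₗ[ℂ] ℂ
  theta : A
  omega : A
  -- the projections realize the direct sum decomposition A = A⁰ ⊕ A^{1,0} ⊕ A^{0,1} ⊕ A²
  p0_mem : ∀ x : A, p0 x ∈ A0
  p10_mem : ∀ x : A, p10 x ∈ A10
  p01_mem : ∀ x : A, p01 x ∈ A01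
  p2_mem : ∀ x : A, p2 x ∈ A2
  decomp : ∀ x : A, p0 x + p10 x + p01 x + p2 x = x
  proj_eq : ∀ x0 ∈ A0, ∀ x10 ∈ A10, ∀ x01 ∈ A01, ∀ x2 ∈ A2,
    p0 (x0 + x10 + x01 + x2) = x0 ∧ p10 (x0 + x10 + x01 + x2) = x10 ∧
    p01 (x0 + x10 + x01 + x2) = x01 ∧ p2 (x0 + x10 + x01 + x2) = x2
  -- multiplicative grading
  one_mem : (1 : A) ∈ A0
  mul00 : ∀ a ∈ A0, ∀ b ∈ A0, a * b ∈ A0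
  mul0_10 : ∀ a ∈ A0, ∀ b ∈ A10, a * b ∈ A10 ∧ b * a ∈ A10
  mul0_01 : ∀ a ∈ A0, ∀ b ∈ A01, a * b ∈ A01 ∧ b * a ∈ A01
  mul0_2 : ∀ a ∈ A0, ∀ b ∈ A2, a * b ∈ A2 ∧ b * a ∈ A2
  mul10_10 : ∀ a ∈ A10, ∀ b ∈ A10, a * b = 0
  mul10_01 : ∀ a ∈ A10, ∀ b ∈ A01, a * b ∈ A2 ∧ b * a ∈ A2
  mul01_01 : ∀ a ∈ A01, ∀ b ∈ A01, a * b ∈ A2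
  mul1_2 : ∀ a : A, (a ∈ A10 ∨ a ∈ A01) → ∀ b ∈ A2, a * b = 0 ∧ b * a = 0
  mul2_2 : ∀ a ∈ A2, ∀ b ∈ A2, a * b = 0
  -- the differential
  d0_mem : ∀ x ∈ A0, p10 (d x) + p01 (d x) = d x
  d10_mem : ∀ x ∈ A10, d x ∈ A2
  d01_mem : ∀ x ∈ A01, d x ∈ A2
  d2_zero : ∀ x ∈ A2, d x = 0
  d_sq : ∀ x : A, d (d x) = 0
  leibniz0 : ∀ a ∈ A0, ∀ b : A, d (a * b) = d a * b + a * d b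
  leibniz1 : ∀ a : A, (a ∈ A10 ∨ a ∈ A01) → ∀ b : A, d (a * b) = d a * b - a * d b
  leibniz2 : ∀ a ∈ A2, ∀ b : A, d (a * b) = d a * b + a * d b
  -- the curvature
  theta_mem : theta ∈ A2
  theta_central : ∀ a : A, theta * a = a * theta
  -- the ℂ-antilinear involution
  st_add : ∀ x y : A, st (x + y) = st x + st y
  st_smul : ∀ (c : ℂ) (x : A), st (c • x) = (starRingEnd ℂ c) • st x
  st_invol : ∀ x : A, st (st x) = x
  st_one : st 1 = 1
  st_mem0 : ∀ x ∈ A0, st x ∈ A0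
  st_mem10 : ∀ x ∈ A10, st x ∈ A01
  st_mem01 : ∀ x ∈ A01, st x ∈ A10
  st_mem2 : ∀ x ∈ A2, st x ∈ A2
  st_mul0 : ∀ a ∈ A0, ∀ b : A, st (a * b) = st b * st a ∧ st (b * a) = st a * st b
  st_mul1 : ∀ a b : A, (a ∈ A10 ∨ a ∈ A01) → (b ∈ A10 ∨ b ∈ A01) →
    st (a * b) = -(st b * st a)
  st_d : ∀ x : A, st (d x) = d (st x)
  st_theta : st theta = -theta
  -- the trace
  tau_zero0 : ∀ x ∈ A0, tau x = 0
  tau_zero10 : ∀ x ∈ A10, tau x = 0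
  tau_zero01 : ∀ x ∈ A01, tau x = 0
  tau_comm0 : ∀ a ∈ A0, ∀ b : A, tau (a * b) = tau (b * a)
  tau_anticomm1 : ∀ a b : A, (a ∈ A10 ∨ a ∈ A01) → (b ∈ A10 ∨ b ∈ A01) →
    tau (a * b) = -tau (b * a)
  tau_d : ∀ x : A, tau (d x) = 0
  tau_star : ∀ x ∈ A2, tau (st x) = starRingEnd ℂ (tau x)
  -- the Kähler element and the Lefschetz operators
  omega_mem : omega ∈ A2
  omega_st : st omega = omega
  omega_comm : ∀ a ∈ A0, omega * a = a * omega
  Lam_mem : ∀ x : A, Lam x ∈ A0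
  Lam_zero0 : ∀ x ∈ A0, Lam x = 0
  Lam_zero10 : ∀ x ∈ A10, Lam x = 0
  Lam_zero01 : ∀ x ∈ A01, Lam x = 0
  Lam_left_inv : ∀ a ∈ A0, Lam (omega * a) = a
  Lam_right_inv : ∀ b ∈ A2, omega * Lam b = b
  -- positive definiteness of the four Hermitian forms
  pos0 : ∀ a ∈ A0, a ≠ 0 →
    0 < (tau (omega * (st a * a))).re ∧ (tau (omega * (st a * a))).im = 0
  pos10 : ∀ a ∈ A10, a ≠ 0 →
    0 < (-Complex.I * tau (st a * a)).re ∧ (-Complex.I * tau (st a * a)).im = 0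
  pos01 : ∀ a ∈ A01, a ≠ 0 →
    0 < (Complex.I * tau (st a * a)).re ∧ (Complex.I * tau (st a * a)).im = 0
  pos2 : ∀ a ∈ A2, a ≠ 0 →
    0 < (tau (omega * (st (Lam a) * Lam a))).re ∧
      (tau (omega * (st (Lam a) * Lam a))).im = 0
  -- the Yang–Mills condition
  ym : d (Lam theta) = 0

namespace LozengeAlgebra

variable {A : Type*} [Ring A] [Algebra ℂ A] (Lz : LozengeAlgebra A)

/-- The operator `∂` (the `A^{1,0}`-component of `d` on `A⁰`, and `d` on `A^{0,1}`). -/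
def del (x : A) : A := Lz.p10 (Lz.d (Lz.p0 x)) + Lz.d (Lz.p01 x)

/-- The operator `∂̄` (the `A^{0,1}`-component of `d` on `A⁰`, and `d` on `A^{1,0}`). -/
def delbar (x : A) : A := Lz.p01 (Lz.d (Lz.p0 x)) + Lz.d (Lz.p10 x)

/-- The total inner product on `A = A⁰ ⊕ A^{1,0} ⊕ A^{0,1} ⊕ A²`, the orthogonal sum of
the Hermitian forms `τ(ω a* b)` on `A⁰`, `−iτ(a* b)` on `A^{1,0}`, `iτ(a* b)` on
`A^{0,1}`, and `τ(ω Λ(a)* Λ(b))` on `A²`. -/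
noncomputable def innerL (u v : A) : ℂ :=
  Lz.tau (Lz.omega * (Lz.st (Lz.p0 u) * Lz.p0 v))
    + (-Complex.I) * Lz.tau (Lz.st (Lz.p10 u) * Lz.p10 v)
    + Complex.I * Lz.tau (Lz.st (Lz.p01 u) * Lz.p01 v)
    + Lz.tau (Lz.omega * (Lz.st (Lz.Lam (Lz.p2 u)) * Lz.Lam (Lz.p2 v)))

end LozengeAlgebra

/-!
Positive definiteness of the inner product makes `⟨a, Δa⟩ = ‖da‖² + ‖d*a‖²` vanish only when
`da = 0` and `d*a = 0`. On `A⁰` the adjoint `d*` vanishes, and the vanishing of `τ` on exact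
forms, `τ(d(a* ∂a)) = τ(d(a* ∂̄a)) = 0`, combined with `d∂a = -d∂̄a`, gives `‖∂a‖ = ‖∂̄a‖`.
The other degrees reduce to these facts through the Kähler-type identities
`d* = ∂* = iΛ∂̄` on `A^{1,0}`, `d* = ∂̄* = -iΛ∂` on `A^{0,1}`, and `∂* = -i∂̄Λ`, `∂̄* = i∂Λ`,
`d* = ∂* + ∂̄*` on `A²`, together with the injectivity of `Λ` on `A²`.
-/

namespace LozengeAlgebra

open Complex ComplexConjugate
open scoped ComplexOrder

variable {A : Type*} [Ring A] [Algebra ℂ A] (Lz : LozengeAlgebra A)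

def IsAdjoint (T S : A → A) : Prop :=
  ∀ u v : A, Lz.innerL (T u) v = Lz.innerL u (S v)

section Grading

lemma st_zero : Lz.st 0 = 0 := by
  simpa using Lz.st_add 0 0

lemma proj_of_mem_A0 {x : A} (hx : x ∈ Lz.A0) :
    Lz.p0 x = x ∧ Lz.p10 x = 0 ∧ Lz.p01 x = 0 ∧ Lz.p2 x = 0 := by
  simpa using Lz.proj_eq x hx 0 (zero_mem _) 0 (zero_mem _) 0 (zero_mem _)

lemma proj_of_mem_A10 {x : A} (hx : x ∈ Lz.A10) :
    Lz.p0 x = 0 ∧ Lz.p10 x = x ∧ Lz.p01 x = 0 ∧ Lz.p2 x = 0 := by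
  simpa using Lz.proj_eq 0 (zero_mem _) x hx 0 (zero_mem _) 0 (zero_mem _)

lemma proj_of_mem_A01 {x : A} (hx : x ∈ Lz.A01) :
    Lz.p0 x = 0 ∧ Lz.p10 x = 0 ∧ Lz.p01 x = x ∧ Lz.p2 x = 0 := by
  simpa using Lz.proj_eq 0 (zero_mem _) 0 (zero_mem _) x hx 0 (zero_mem _)

lemma proj_of_mem_A2 {x : A} (hx : x ∈ Lz.A2) :
    Lz.p0 x = 0 ∧ Lz.p10 x = 0 ∧ Lz.p01 x = 0 ∧ Lz.p2 x = x := by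
  simpa using Lz.proj_eq 0 (zero_mem _) 0 (zero_mem _) 0 (zero_mem _) x hx

lemma add_eq_zero_iff_of_mem_A10_of_mem_A01 {x y : A} (hx : x ∈ Lz.A10) (hy : y ∈ Lz.A01) :
    x + y = 0 ↔ x = 0 ∧ y = 0 := by
  refine ⟨fun h => ⟨?_, ?_⟩, fun ⟨hx0, hy0⟩ => by rw [hx0, hy0, add_zero]⟩
  · simpa [(Lz.proj_of_mem_A10 hx).2.1, (Lz.proj_of_mem_A01 hy).2.1] using congrArg Lz.p10 h
  · simpa [(Lz.proj_of_mem_A10 hx).2.2.1, (Lz.proj_of_mem_A01 hy).2.2.1] using congrArg Lz.p01 h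

lemma proj_st (x : A) :
    Lz.p0 (Lz.st x) = Lz.st (Lz.p0 x) ∧ Lz.p10 (Lz.st x) = Lz.st (Lz.p01 x) ∧
      Lz.p01 (Lz.st x) = Lz.st (Lz.p10 x) ∧ Lz.p2 (Lz.st x) = Lz.st (Lz.p2 x) := by
  have hsum : Lz.st (Lz.p0 x) + Lz.st (Lz.p01 x) + Lz.st (Lz.p10 x) + Lz.st (Lz.p2 x)
      = Lz.st x := by
    rw [← Lz.st_add, ← Lz.st_add, ← Lz.st_add, add_right_comm (Lz.p0 x), Lz.decomp]
  have h := Lz.proj_eq _ (Lz.st_mem0 _ (Lz.p0_mem x)) _ (Lz.st_mem01 _ (Lz.p01_mem x))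
    _ (Lz.st_mem10 _ (Lz.p10_mem x)) _ (Lz.st_mem2 _ (Lz.p2_mem x))
  rwa [hsum] at h

lemma Lam_eq_zero_iff {b : A} (hb : b ∈ Lz.A2) : Lz.Lam b = 0 ↔ b = 0 :=
  ⟨fun h => by rw [← Lz.Lam_right_inv b hb, h, mul_zero], fun h => by rw [h, map_zero]⟩

end Grading

section Dolbeault

lemma del_of_mem_A0 {w : A} (hw : w ∈ Lz.A0) : Lz.del w = Lz.p10 (Lz.d w) := by
  obtain ⟨h0, -, h01, -⟩ := Lz.proj_of_mem_A0 hw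
  rw [del, h0, h01, map_zero, add_zero]

lemma delbar_of_mem_A0 {w : A} (hw : w ∈ Lz.A0) : Lz.delbar w = Lz.p01 (Lz.d w) := by
  obtain ⟨h0, h10, -, -⟩ := Lz.proj_of_mem_A0 hw
  rw [delbar, h0, h10, map_zero, add_zero]

lemma del_mem_A10 {w : A} (hw : w ∈ Lz.A0) : Lz.del w ∈ Lz.A10 := by
  rw [Lz.del_of_mem_A0 hw]
  exact Lz.p10_mem _

lemma delbar_mem_A01 {w : A} (hw : w ∈ Lz.A0) : Lz.delbar w ∈ Lz.A01 := by
  rw [Lz.delbar_of_mem_A0 hw]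
  exact Lz.p01_mem _

lemma delbar_of_mem_A10 {x : A} (hx : x ∈ Lz.A10) : Lz.delbar x = Lz.d x := by
  obtain ⟨h0, h10, -, -⟩ := Lz.proj_of_mem_A10 hx
  rw [delbar, h0, h10, map_zero, map_zero, zero_add]

lemma del_of_mem_A01 {x : A} (hx : x ∈ Lz.A01) : Lz.del x = Lz.d x := by
  obtain ⟨h0, -, h01, -⟩ := Lz.proj_of_mem_A01 hx
  rw [del, h0, h01, map_zero, map_zero, zero_add]

lemma d_eq_del_add_delbar (x : A) : Lz.d x = Lz.del x + Lz.delbar x := by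
  conv_lhs => rw [← Lz.decomp x]
  rw [map_add, map_add, map_add, Lz.d2_zero _ (Lz.p2_mem x), ← Lz.d0_mem _ (Lz.p0_mem x), del,
    delbar]
  abel

lemma proj_del (x : A) :
    Lz.p0 (Lz.del x) = 0 ∧ Lz.p10 (Lz.del x) = Lz.del (Lz.p0 x) ∧
      Lz.p01 (Lz.del x) = 0 ∧ Lz.p2 (Lz.del x) = Lz.d (Lz.p01 x) := by
  have hsum : 0 + Lz.del (Lz.p0 x) + 0 + Lz.d (Lz.p01 x) = Lz.del x := by
    rw [Lz.del_of_mem_A0 (Lz.p0_mem x), del]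
    abel
  have h := Lz.proj_eq 0 (zero_mem _) _ (Lz.del_mem_A10 (Lz.p0_mem x)) 0 (zero_mem _) _
    (Lz.d01_mem _ (Lz.p01_mem x))
  rwa [hsum] at h

lemma proj_delbar (x : A) :
    Lz.p0 (Lz.delbar x) = 0 ∧ Lz.p10 (Lz.delbar x) = 0 ∧
      Lz.p01 (Lz.delbar x) = Lz.delbar (Lz.p0 x) ∧ Lz.p2 (Lz.delbar x) = Lz.d (Lz.p10 x) := by
  have hsum : 0 + 0 + Lz.delbar (Lz.p0 x) + Lz.d (Lz.p10 x) = Lz.delbar x := by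
    rw [Lz.delbar_of_mem_A0 (Lz.p0_mem x), delbar]
    abel
  have h := Lz.proj_eq 0 (zero_mem _) 0 (zero_mem _) _ (Lz.delbar_mem_A01 (Lz.p0_mem x)) _
    (Lz.d10_mem _ (Lz.p10_mem x))
  rwa [hsum] at h

lemma p0_d (x : A) : Lz.p0 (Lz.d x) = 0 := by
  rw [Lz.d_eq_del_add_delbar, map_add, (Lz.proj_del x).1, (Lz.proj_delbar x).1, add_zero]

lemma st_del (x : A) : Lz.st (Lz.del x) = Lz.delbar (Lz.st x) := by
  obtain ⟨h0, h10, -, -⟩ := Lz.proj_st x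
  rw [del, delbar, Lz.st_add, ← (Lz.proj_st _).2.2.1, Lz.st_d, Lz.st_d, h0, h10]

lemma st_delbar (x : A) : Lz.st (Lz.delbar x) = Lz.del (Lz.st x) := by
  rw [← Lz.st_invol (Lz.del (Lz.st x)), Lz.st_del, Lz.st_invol]

end Dolbeault

section Trace

lemma tau_omega_mul_Lam {z y : A} (hz : z ∈ Lz.A0) (hy : y ∈ Lz.A2) :
    Lz.tau (Lz.omega * (z * Lz.Lam y)) = Lz.tau (z * y) := by
  rw [← mul_assoc, Lz.omega_comm z hz, mul_assoc, Lz.Lam_right_inv y hy]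

lemma conj_tau_mul {x y : A} (hx : x ∈ Lz.A10 ∨ x ∈ Lz.A01) (hy : y ∈ Lz.A10 ∨ y ∈ Lz.A01)
    (hxy : x * y ∈ Lz.A2) : conj (Lz.tau (x * y)) = -Lz.tau (Lz.st y * Lz.st x) := by
  rw [← Lz.tau_star _ hxy, Lz.st_mul1 x y hx hy, map_neg]

lemma tau_mul_eq_zero_of_mem_A01 {x y : A} (hx : x ∈ Lz.A01) (hy : y ∈ Lz.A01) :
    Lz.tau (x * y) = 0 := by
  have h := Lz.conj_tau_mul (Or.inr hx) (Or.inr hy) (Lz.mul01_01 x hx y hy)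
  rw [Lz.mul10_10 _ (Lz.st_mem01 y hy) _ (Lz.st_mem01 x hx), map_zero, neg_zero] at h
  simpa using h

lemma tau_mul_d_of_mem_A0 {w : A} (hw : w ∈ Lz.A0) (x : A) :
    Lz.tau (w * Lz.d x) = -Lz.tau (Lz.d w * x) := by
  have h := Lz.tau_d (w * x)
  rw [Lz.leibniz0 w hw x, map_add] at h
  linear_combination h

lemma tau_mul_d_of_mem_A10 {w x : A} (hw : w ∈ Lz.A0) (hx : x ∈ Lz.A10) :
    Lz.tau (w * Lz.d x) = -Lz.tau (Lz.delbar w * x) := by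
  rw [Lz.tau_mul_d_of_mem_A0 hw, Lz.d_eq_del_add_delbar w, add_mul,
    Lz.mul10_10 _ (Lz.del_mem_A10 hw) x hx, zero_add]

lemma tau_mul_d_of_mem_A01 {w x : A} (hw : w ∈ Lz.A0) (hx : x ∈ Lz.A01) :
    Lz.tau (w * Lz.d x) = -Lz.tau (Lz.del w * x) := by
  rw [Lz.tau_mul_d_of_mem_A0 hw, Lz.d_eq_del_add_delbar w, add_mul, map_add,
    Lz.tau_mul_eq_zero_of_mem_A01 (Lz.delbar_mem_A01 hw) hx, add_zero]

lemma conj_tau_omega_mul {x y : A} (hx : x ∈ Lz.A0) (hy : y ∈ Lz.A0) :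
    conj (Lz.tau (Lz.omega * (Lz.st x * y))) = Lz.tau (Lz.omega * (Lz.st y * x)) := by
  have hxy : Lz.st x * y ∈ Lz.A0 := Lz.mul00 _ (Lz.st_mem0 x hx) y hy
  rw [← Lz.tau_star _ (Lz.mul0_2 _ hxy _ Lz.omega_mem).2, (Lz.st_mul0 _ hxy _).2, Lz.omega_st,
    (Lz.st_mul0 _ (Lz.st_mem0 x hx) y).1, Lz.st_invol,
    Lz.omega_comm _ (Lz.mul00 _ (Lz.st_mem0 y hy) x hx)]

end Trace

section InnerProduct

lemma innerL_add_left (x y v : A) :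
    Lz.innerL (x + y) v = Lz.innerL x v + Lz.innerL y v := by
  simp only [innerL, map_add, Lz.st_add, add_mul, mul_add]
  ring

lemma innerL_add_right (u x y : A) :
    Lz.innerL u (x + y) = Lz.innerL u x + Lz.innerL u y := by
  simp only [innerL, map_add, mul_add]
  ring

lemma innerL_sub_right (u x y : A) :
    Lz.innerL u (x - y) = Lz.innerL u x - Lz.innerL u y := by
  simp only [innerL, map_sub, mul_sub]
  ring

lemma innerL_smul_right (c : ℂ) (u x : A) :
    Lz.innerL u (c • x) = c * Lz.innerL u x := by
  simp only [innerL, map_smul, mul_smul_comm, smul_eq_mul]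
  ring

lemma innerL_zero_right (u : A) : Lz.innerL u 0 = 0 := by
  simp [innerL]

lemma innerL_of_right_mem_A0 (u : A) {v : A} (hv : v ∈ Lz.A0) :
    Lz.innerL u v = Lz.tau (Lz.omega * (Lz.st (Lz.p0 u) * v)) := by
  obtain ⟨h0, h10, h01, h2⟩ := Lz.proj_of_mem_A0 hv
  simp [innerL, h0, h10, h01, h2]

lemma innerL_of_right_mem_A10 (u : A) {v : A} (hv : v ∈ Lz.A10) :
    Lz.innerL u v = -I * Lz.tau (Lz.st (Lz.p10 u) * v) := by
  obtain ⟨h0, h10, h01, h2⟩ := Lz.proj_of_mem_A10 hv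
  simp [innerL, h0, h10, h01, h2]

lemma innerL_of_right_mem_A01 (u : A) {v : A} (hv : v ∈ Lz.A01) :
    Lz.innerL u v = I * Lz.tau (Lz.st (Lz.p01 u) * v) := by
  obtain ⟨h0, h10, h01, h2⟩ := Lz.proj_of_mem_A01 hv
  simp [innerL, h0, h10, h01, h2]

lemma innerL_of_right_mem_A2 (u : A) {v : A} (hv : v ∈ Lz.A2) :
    Lz.innerL u v = Lz.tau (Lz.omega * (Lz.st (Lz.Lam (Lz.p2 u)) * Lz.Lam v)) := by
  obtain ⟨h0, h10, h01, h2⟩ := Lz.proj_of_mem_A2 hv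
  simp [innerL, h0, h10, h01, h2]

lemma innerL_conj (u v : A) : Lz.innerL u v = conj (Lz.innerL v u) := by
  have h10 := Lz.conj_tau_mul (Or.inr (Lz.st_mem10 _ (Lz.p10_mem v))) (Or.inl (Lz.p10_mem u))
    (Lz.mul10_01 _ (Lz.p10_mem u) _ (Lz.st_mem10 _ (Lz.p10_mem v))).2
  have h01 := Lz.conj_tau_mul (Or.inl (Lz.st_mem01 _ (Lz.p01_mem v))) (Or.inr (Lz.p01_mem u))
    (Lz.mul10_01 _ (Lz.st_mem01 _ (Lz.p01_mem v)) _ (Lz.p01_mem u)).1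
  rw [Lz.st_invol] at h10 h01
  simp only [innerL, map_add, map_mul, map_neg, conj_I, h10, h01,
    Lz.conj_tau_omega_mul (Lz.p0_mem v) (Lz.p0_mem u),
    Lz.conj_tau_omega_mul (Lz.Lam_mem (Lz.p2 v)) (Lz.Lam_mem (Lz.p2 u))]
  ring

lemma zero_le_and_eq_zero_of_pos {M : Type*} [Zero M] {S : Set M} {q : M → ℂ} (h0 : q 0 = 0)
    (hpos : ∀ y ∈ S, y ≠ 0 → 0 < (q y).re ∧ (q y).im = 0) {y : M} (hy : y ∈ S) :
    0 ≤ q y ∧ (q y = 0 → y = 0) := by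
  rcases eq_or_ne y 0 with rfl | hne
  · simp [h0]
  · have hq : 0 < q y := Complex.lt_def.2 ⟨(hpos y hy hne).1, (hpos y hy hne).2.symm⟩
    exact ⟨hq.le, fun h => absurd h hq.ne'⟩

lemma innerL_self_nonneg_and_eq_zero (x : A) :
    0 ≤ Lz.innerL x x ∧ (Lz.innerL x x = 0 → x = 0) := by
  obtain ⟨n0, z0⟩ := zero_le_and_eq_zero_of_pos (by simp [Lz.st_zero]) Lz.pos0 (Lz.p0_mem x)
  obtain ⟨n10, z10⟩ := zero_le_and_eq_zero_of_pos (by simp) Lz.pos10 (Lz.p10_mem x)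
  obtain ⟨n01, z01⟩ := zero_le_and_eq_zero_of_pos (by simp) Lz.pos01 (Lz.p01_mem x)
  obtain ⟨n2, z2⟩ := zero_le_and_eq_zero_of_pos (by simp [Lz.st_zero]) Lz.pos2 (Lz.p2_mem x)
  refine ⟨add_nonneg (add_nonneg (add_nonneg n0 n10) n01) n2, fun h => ?_⟩
  obtain ⟨h', e2⟩ := (add_eq_zero_iff_of_nonneg (add_nonneg (add_nonneg n0 n10) n01) n2).1 h
  obtain ⟨h'', e01⟩ := (add_eq_zero_iff_of_nonneg (add_nonneg n0 n10) n01).1 h'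
  obtain ⟨e0, e10⟩ := (add_eq_zero_iff_of_nonneg n0 n10).1 h''
  rw [← Lz.decomp x, z0 e0, z10 e10, z01 e01, z2 e2, add_zero, add_zero, add_zero]

lemma innerL_self_nonneg (x : A) : 0 ≤ Lz.innerL x x :=
  (Lz.innerL_self_nonneg_and_eq_zero x).1

lemma innerL_self_eq_zero {x : A} : Lz.innerL x x = 0 ↔ x = 0 :=
  ⟨(Lz.innerL_self_nonneg_and_eq_zero x).2, fun h => by rw [h, Lz.innerL_zero_right]⟩

lemma conj_innerL_self (x : A) : conj (Lz.innerL x x) = Lz.innerL x x :=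
  Complex.conj_eq_iff_im.2 (Complex.nonneg_iff.1 (Lz.innerL_self_nonneg x)).2.symm

end InnerProduct

namespace IsAdjoint

variable {Lz} {S : A → A}

lemma apply_eq {T : A → A} (h : Lz.IsAdjoint T S) {v w : A}
    (hw : ∀ u, Lz.innerL (T u) v = Lz.innerL u w) : S v = w := by
  have hzero : Lz.innerL (S v - w) (S v - w) = 0 := by
    rw [Lz.innerL_sub_right, ← h, hw, sub_self]
  exact sub_eq_zero.1 (Lz.innerL_self_eq_zero.1 hzero)

lemma apply_zero {T : A → A} (h : Lz.IsAdjoint T S) : S 0 = 0 :=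
  h.apply_eq fun u => by rw [Lz.innerL_zero_right, Lz.innerL_zero_right]

lemma laplacian_eq_zero_iff {T : A →ₗ[ℂ] A} (h : Lz.IsAdjoint T S) (a : A) :
    T (S a) + S (T a) = 0 ↔ T a = 0 ∧ S a = 0 := by
  refine ⟨fun hΔ => ?_, fun ⟨hT, hS⟩ => by rw [hS, hT, h.apply_zero, map_zero, add_zero]⟩
  have hS : Lz.innerL (S a) (S a) = Lz.innerL a (T (S a)) := by
    rw [Lz.innerL_conj a, h, Lz.conj_innerL_self]
  have hsum : Lz.innerL (T a) (T a) + Lz.innerL (S a) (S a) = 0 := by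
    rw [h, hS, add_comm, ← Lz.innerL_add_right, hΔ, Lz.innerL_zero_right]
  obtain ⟨hT, hS⟩ :=
    (add_eq_zero_iff_of_nonneg (Lz.innerL_self_nonneg _) (Lz.innerL_self_nonneg _)).1 hsum
  exact ⟨Lz.innerL_self_eq_zero.1 hT, Lz.innerL_self_eq_zero.1 hS⟩

end IsAdjoint

variable {S : A → A}

section DegreeZero

lemma adjoint_d_eq_zero_of_mem_A0 (h : Lz.IsAdjoint Lz.d S) {a : A} (ha : a ∈ Lz.A0) :
    S a = 0 :=
  h.apply_eq fun u => by
    rw [Lz.innerL_zero_right, Lz.innerL_of_right_mem_A0 _ ha, Lz.p0_d, Lz.st_zero, zero_mul,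
      mul_zero, map_zero]

lemma innerL_del_self_eq_innerL_delbar_self {a : A} (ha : a ∈ Lz.A0) :
    Lz.innerL (Lz.del a) (Lz.del a) = Lz.innerL (Lz.delbar a) (Lz.delbar a) := by
  have h10 := Lz.del_mem_A10 ha
  have h01 := Lz.delbar_mem_A01 ha
  have hsa := Lz.st_mem0 a ha
  have hd : Lz.d (Lz.del a) = -Lz.d (Lz.delbar a) := by
    rw [eq_neg_iff_add_eq_zero, ← map_add, ← Lz.d_eq_del_add_delbar, Lz.d_sq]
  have hstokes : Lz.tau (Lz.st (Lz.del a) * Lz.del a)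
      = -Lz.tau (Lz.st (Lz.delbar a) * Lz.delbar a) := by
    have e10 := Lz.tau_mul_d_of_mem_A10 hsa h10
    have e01 := Lz.tau_mul_d_of_mem_A01 hsa h01
    rw [hd, mul_neg, map_neg] at e10
    rw [Lz.st_del, Lz.st_delbar]
    linear_combination e01 + e10
  rw [Lz.innerL_of_right_mem_A10 _ h10, Lz.innerL_of_right_mem_A01 _ h01,
    (Lz.proj_of_mem_A10 h10).2.1, (Lz.proj_of_mem_A01 h01).2.2.1, hstokes]
  ring

lemma del_eq_zero_iff_delbar_eq_zero {a : A} (ha : a ∈ Lz.A0) :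
    Lz.del a = 0 ↔ Lz.delbar a = 0 := by
  rw [← Lz.innerL_self_eq_zero, Lz.innerL_del_self_eq_innerL_delbar_self ha,
    Lz.innerL_self_eq_zero]

lemma laplacian_eq_zero_iff_of_mem_A0 (h : Lz.IsAdjoint Lz.d S) {a : A} (ha : a ∈ Lz.A0) :
    Lz.d (S a) + S (Lz.d a) = 0 ↔ Lz.del a = 0 := by
  rw [h.laplacian_eq_zero_iff, Lz.adjoint_d_eq_zero_of_mem_A0 h ha, eq_self_iff_true, and_true,
    Lz.d_eq_del_add_delbar, Lz.add_eq_zero_iff_of_mem_A10_of_mem_A01 (Lz.del_mem_A10 ha)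
      (Lz.delbar_mem_A01 ha), ← Lz.del_eq_zero_iff_delbar_eq_zero ha, and_self]

end DegreeZero

section DegreeOne

lemma innerL_d_left_of_mem_A10 {a : A} (ha : a ∈ Lz.A10) (u : A) :
    Lz.innerL (Lz.d u) a = Lz.innerL (Lz.del u) a := by
  rw [Lz.d_eq_del_add_delbar, Lz.innerL_add_left, Lz.innerL_of_right_mem_A10 (Lz.delbar u) ha,
    (Lz.proj_delbar u).2.1, Lz.st_zero, zero_mul, map_zero, mul_zero, add_zero]

lemma innerL_d_left_of_mem_A01 {a : A} (ha : a ∈ Lz.A01) (u : A) :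
    Lz.innerL (Lz.d u) a = Lz.innerL (Lz.delbar u) a := by
  rw [Lz.d_eq_del_add_delbar, Lz.innerL_add_left, Lz.innerL_of_right_mem_A01 (Lz.del u) ha,
    (Lz.proj_del u).2.2.1, Lz.st_zero, zero_mul, map_zero, mul_zero, zero_add]

lemma innerL_del_left_of_mem_A10 {a : A} (ha : a ∈ Lz.A10) (u : A) :
    Lz.innerL (Lz.del u) a = Lz.innerL u (I • Lz.Lam (Lz.d a)) := by
  have hw := Lz.st_mem0 _ (Lz.p0_mem u)
  rw [Lz.innerL_of_right_mem_A10 _ ha, (Lz.proj_del u).2.1, Lz.st_del,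
    ← neg_eq_iff_eq_neg.2 (Lz.tau_mul_d_of_mem_A10 hw ha), Lz.innerL_smul_right,
    Lz.innerL_of_right_mem_A0 _ (Lz.Lam_mem _), Lz.tau_omega_mul_Lam hw (Lz.d10_mem a ha)]
  ring

lemma innerL_delbar_left_of_mem_A01 {a : A} (ha : a ∈ Lz.A01) (u : A) :
    Lz.innerL (Lz.delbar u) a = Lz.innerL u (-I • Lz.Lam (Lz.d a)) := by
  have hw := Lz.st_mem0 _ (Lz.p0_mem u)
  rw [Lz.innerL_of_right_mem_A01 _ ha, (Lz.proj_delbar u).2.2.1, Lz.st_delbar,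
    ← neg_eq_iff_eq_neg.2 (Lz.tau_mul_d_of_mem_A01 hw ha), Lz.innerL_smul_right,
    Lz.innerL_of_right_mem_A0 _ (Lz.Lam_mem _), Lz.tau_omega_mul_Lam hw (Lz.d01_mem a ha)]
  ring

lemma adjoint_del_of_mem_A10 (h : Lz.IsAdjoint Lz.del S) {a : A} (ha : a ∈ Lz.A10) :
    S a = I • Lz.Lam (Lz.d a) :=
  h.apply_eq (Lz.innerL_del_left_of_mem_A10 ha)

lemma adjoint_delbar_of_mem_A01 (h : Lz.IsAdjoint Lz.delbar S) {a : A} (ha : a ∈ Lz.A01) :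
    S a = -I • Lz.Lam (Lz.d a) :=
  h.apply_eq (Lz.innerL_delbar_left_of_mem_A01 ha)

lemma laplacian_eq_zero_iff_of_mem_A10 (h : Lz.IsAdjoint Lz.d S) {a : A} (ha : a ∈ Lz.A10) :
    Lz.d (S a) + S (Lz.d a) = 0 ↔ Lz.d a = 0 := by
  have hS : S a = I • Lz.Lam (Lz.d a) :=
    h.apply_eq fun u => by rw [Lz.innerL_d_left_of_mem_A10 ha, Lz.innerL_del_left_of_mem_A10 ha]
  rw [h.laplacian_eq_zero_iff, hS, smul_eq_zero_iff_right I_ne_zero,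
    Lz.Lam_eq_zero_iff (Lz.d10_mem a ha), and_self]

lemma laplacian_eq_zero_iff_of_mem_A01 (h : Lz.IsAdjoint Lz.d S) {a : A} (ha : a ∈ Lz.A01) :
    Lz.d (S a) + S (Lz.d a) = 0 ↔ Lz.d a = 0 := by
  have hS : S a = -I • Lz.Lam (Lz.d a) :=
    h.apply_eq fun u => by
      rw [Lz.innerL_d_left_of_mem_A01 ha, Lz.innerL_delbar_left_of_mem_A01 ha]
  rw [h.laplacian_eq_zero_iff, hS, smul_eq_zero_iff_right (neg_ne_zero.2 I_ne_zero),
    Lz.Lam_eq_zero_iff (Lz.d01_mem a ha), and_self]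

end DegreeOne

section DegreeTwo

lemma innerL_d_left_of_mem_A01_of_mem_A2 {x a : A} (hx : x ∈ Lz.A01) (ha : a ∈ Lz.A2) :
    Lz.innerL (Lz.d x) a = Lz.tau (Lz.st x * Lz.delbar (Lz.Lam a)) := by
  have hw := Lz.st_mem0 _ (Lz.Lam_mem a)
  rw [Lz.innerL_conj, Lz.innerL_of_right_mem_A2 _ (Lz.d01_mem x hx), (Lz.proj_of_mem_A2 ha).2.2.2,
    Lz.tau_omega_mul_Lam hw (Lz.d01_mem x hx), Lz.tau_mul_d_of_mem_A01 hw hx, map_neg,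
    Lz.conj_tau_mul (Or.inl (Lz.del_mem_A10 hw)) (Or.inr hx)
      (Lz.mul10_01 _ (Lz.del_mem_A10 hw) x hx).1, Lz.st_del, Lz.st_invol, neg_neg]

lemma innerL_d_left_of_mem_A10_of_mem_A2 {x a : A} (hx : x ∈ Lz.A10) (ha : a ∈ Lz.A2) :
    Lz.innerL (Lz.d x) a = Lz.tau (Lz.st x * Lz.del (Lz.Lam a)) := by
  have hw := Lz.st_mem0 _ (Lz.Lam_mem a)
  rw [Lz.innerL_conj, Lz.innerL_of_right_mem_A2 _ (Lz.d10_mem x hx), (Lz.proj_of_mem_A2 ha).2.2.2,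
    Lz.tau_omega_mul_Lam hw (Lz.d10_mem x hx), Lz.tau_mul_d_of_mem_A10 hw hx, map_neg,
    Lz.conj_tau_mul (Or.inr (Lz.delbar_mem_A01 hw)) (Or.inl hx)
      (Lz.mul10_01 x hx _ (Lz.delbar_mem_A01 hw)).2, Lz.st_delbar, Lz.st_invol, neg_neg]

lemma innerL_del_left_of_mem_A2 {a : A} (ha : a ∈ Lz.A2) (u : A) :
    Lz.innerL (Lz.del u) a = Lz.innerL u (-I • Lz.delbar (Lz.Lam a)) := by
  have hp2 : Lz.innerL (Lz.del u) a = Lz.innerL (Lz.d (Lz.p01 u)) a := by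
    rw [Lz.innerL_of_right_mem_A2 _ ha, Lz.innerL_of_right_mem_A2 _ ha, (Lz.proj_del u).2.2.2,
      (Lz.proj_of_mem_A2 (Lz.d01_mem _ (Lz.p01_mem u))).2.2.2]
  rw [hp2, Lz.innerL_d_left_of_mem_A01_of_mem_A2 (Lz.p01_mem u) ha, Lz.innerL_smul_right,
    Lz.innerL_of_right_mem_A01 _ (Lz.delbar_mem_A01 (Lz.Lam_mem a))]
  linear_combination Lz.tau (Lz.st (Lz.p01 u) * Lz.delbar (Lz.Lam a)) * I_sq

lemma innerL_delbar_left_of_mem_A2 {a : A} (ha : a ∈ Lz.A2) (u : A) :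
    Lz.innerL (Lz.delbar u) a = Lz.innerL u (I • Lz.del (Lz.Lam a)) := by
  have hp2 : Lz.innerL (Lz.delbar u) a = Lz.innerL (Lz.d (Lz.p10 u)) a := by
    rw [Lz.innerL_of_right_mem_A2 _ ha, Lz.innerL_of_right_mem_A2 _ ha, (Lz.proj_delbar u).2.2.2,
      (Lz.proj_of_mem_A2 (Lz.d10_mem _ (Lz.p10_mem u))).2.2.2]
  rw [hp2, Lz.innerL_d_left_of_mem_A10_of_mem_A2 (Lz.p10_mem u) ha, Lz.innerL_smul_right,
    Lz.innerL_of_right_mem_A10 _ (Lz.del_mem_A10 (Lz.Lam_mem a))]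
  linear_combination Lz.tau (Lz.st (Lz.p10 u) * Lz.del (Lz.Lam a)) * I_sq

lemma adjoint_del_of_mem_A2 (h : Lz.IsAdjoint Lz.del S) {a : A} (ha : a ∈ Lz.A2) :
    S a = -I • Lz.delbar (Lz.Lam a) :=
  h.apply_eq (Lz.innerL_del_left_of_mem_A2 ha)

lemma adjoint_delbar_of_mem_A2 (h : Lz.IsAdjoint Lz.delbar S) {a : A} (ha : a ∈ Lz.A2) :
    S a = I • Lz.del (Lz.Lam a) :=
  h.apply_eq (Lz.innerL_delbar_left_of_mem_A2 ha)

lemma laplacian_eq_zero_iff_of_mem_A2 (h : Lz.IsAdjoint Lz.d S) {a : A} (ha : a ∈ Lz.A2) :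
    Lz.d (S a) + S (Lz.d a) = 0 ↔ Lz.delbar (Lz.Lam a) = 0 := by
  have hΛ := Lz.Lam_mem a
  have hS : S a = I • Lz.del (Lz.Lam a) + -I • Lz.delbar (Lz.Lam a) :=
    h.apply_eq fun u => by
      rw [Lz.d_eq_del_add_delbar, Lz.innerL_add_left, Lz.innerL_add_right,
        Lz.innerL_del_left_of_mem_A2 ha, Lz.innerL_delbar_left_of_mem_A2 ha, add_comm]
  rw [h.laplacian_eq_zero_iff, Lz.d2_zero a ha, eq_self_iff_true, true_and, hS,
    Lz.add_eq_zero_iff_of_mem_A10_of_mem_A01 (Submodule.smul_mem _ _ (Lz.del_mem_A10 hΛ))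
      (Submodule.smul_mem _ _ (Lz.delbar_mem_A01 hΛ)),
    smul_eq_zero_iff_right I_ne_zero, smul_eq_zero_iff_right (neg_ne_zero.2 I_ne_zero),
    Lz.del_eq_zero_iff_delbar_eq_zero hΛ, and_self]

end DegreeTwo

end LozengeAlgebra

open LozengeAlgebra in
theorem lozenge_harmonicity_characterization_general
    (A : Type*) [Ring A] [Algebra ℂ A]
    (Lz : LozengeAlgebra A)
    (dS delS delbarS : A → A)
    (hdS : ∀ u v : A, Lz.innerL (Lz.d u) v = Lz.innerL u (dS v))
    (hdelS : ∀ u v : A, Lz.innerL (Lz.del u) v = Lz.innerL u (delS v))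
    (hdelbarS : ∀ u v : A, Lz.innerL (Lz.delbar u) v = Lz.innerL u (delbarS v)) :
    (∀ a ∈ Lz.A0,
      (Lz.d (dS a) + dS (Lz.d a) = 0 ↔ Lz.del a = 0) ∧
      (Lz.d (dS a) + dS (Lz.d a) = 0 ↔ Lz.delbar a = 0)) ∧
    (∀ a ∈ Lz.A10,
      (Lz.d (dS a) + dS (Lz.d a) = 0 ↔ delS a = 0) ∧
      (Lz.d (dS a) + dS (Lz.d a) = 0 ↔ Lz.delbar a = 0)) ∧
    (∀ a ∈ Lz.A01,
      (Lz.d (dS a) + dS (Lz.d a) = 0 ↔ Lz.del a = 0) ∧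
      (Lz.d (dS a) + dS (Lz.d a) = 0 ↔ delbarS a = 0)) ∧
    (∀ a ∈ Lz.A2,
      (Lz.d (dS a) + dS (Lz.d a) = 0 ↔ delS a = 0) ∧
      (Lz.d (dS a) + dS (Lz.d a) = 0 ↔ delbarS a = 0)) := by
  refine ⟨fun a ha => ?_, fun a ha => ?_, fun a ha => ?_, fun a ha => ?_⟩
  · rw [Lz.laplacian_eq_zero_iff_of_mem_A0 hdS ha, Lz.del_eq_zero_iff_delbar_eq_zero ha]
    exact ⟨.rfl, .rfl⟩
  · rw [Lz.laplacian_eq_zero_iff_of_mem_A10 hdS ha, Lz.adjoint_del_of_mem_A10 hdelS ha,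
      smul_eq_zero_iff_right Complex.I_ne_zero, Lz.Lam_eq_zero_iff (Lz.d10_mem a ha),
      Lz.delbar_of_mem_A10 ha]
    exact ⟨.rfl, .rfl⟩
  · rw [Lz.laplacian_eq_zero_iff_of_mem_A01 hdS ha, Lz.adjoint_delbar_of_mem_A01 hdelbarS ha,
      smul_eq_zero_iff_right (neg_ne_zero.2 Complex.I_ne_zero),
      Lz.Lam_eq_zero_iff (Lz.d01_mem a ha), Lz.del_of_mem_A01 ha]
    exact ⟨.rfl, .rfl⟩
  · rw [Lz.laplacian_eq_zero_iff_of_mem_A2 hdS ha, Lz.adjoint_del_of_mem_A2 hdelS ha,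
      Lz.adjoint_delbar_of_mem_A2 hdelbarS ha,
      smul_eq_zero_iff_right (neg_ne_zero.2 Complex.I_ne_zero),
      smul_eq_zero_iff_right Complex.I_ne_zero, Lz.del_eq_zero_iff_delbar_eq_zero (Lz.Lam_mem a)]
    exact ⟨.rfl, .rfl⟩

open LozengeAlgebra in
/-- in a finite-dimensional lozenge algebra with Laplacian `Δ = dd* + d*d`
(adjoints `dS`, `delS`, `delbarS` of `d`, `∂`, `∂̄` taken with respect to the inner
products), harmonicity is characterized in each degree by:
for `a ∈ A⁰`: `Δa = 0 ⇔ ∂a = 0 ⇔ ∂̄a = 0`;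
for `a ∈ A^{1,0}`: `Δa = 0 ⇔ ∂*a = 0 ⇔ ∂̄a = 0`;
for `a ∈ A^{0,1}`: `Δa = 0 ⇔ ∂a = 0 ⇔ ∂̄*a = 0`;
for `a ∈ A²`: `Δa = 0 ⇔ ∂*a = 0 ⇔ ∂̄*a = 0`. -/
theorem lozenge_harmonicity_characterization
    (A : Type*) [Ring A] [Algebra ℂ A] [FiniteDimensional ℂ A]
    (Lz : LozengeAlgebra A)
    (dS delS delbarS : A → A)
    (hdS : ∀ u v : A, Lz.innerL (Lz.d u) v = Lz.innerL u (dS v))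
    (hdelS : ∀ u v : A, Lz.innerL (Lz.del u) v = Lz.innerL u (delS v))
    (hdelbarS : ∀ u v : A, Lz.innerL (Lz.delbar u) v = Lz.innerL u (delbarS v)) :
    (∀ a ∈ Lz.A0,
      (Lz.d (dS a) + dS (Lz.d a) = 0 ↔ Lz.del a = 0) ∧
      (Lz.d (dS a) + dS (Lz.d a) = 0 ↔ Lz.delbar a = 0)) ∧
    (∀ a ∈ Lz.A10,
      (Lz.d (dS a) + dS (Lz.d a) = 0 ↔ delS a = 0) ∧
      (Lz.d (dS a) + dS (Lz.d a) = 0 ↔ Lz.delbar a = 0)) ∧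
    (∀ a ∈ Lz.A01,
      (Lz.d (dS a) + dS (Lz.d a) = 0 ↔ Lz.del a = 0) ∧
      (Lz.d (dS a) + dS (Lz.d a) = 0 ↔ delbarS a = 0)) ∧
    (∀ a ∈ Lz.A2,
      (Lz.d (dS a) + dS (Lz.d a) = 0 ↔ delS a = 0) ∧
      (Lz.d (dS a) + dS (Lz.d a) = 0 ↔ delbarS a = 0)) :=
  lozenge_harmonicity_characterization_general A Lz dS delS delbarS hdS hdelS hdelbarS
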